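/- arXiv:2601.20119 — 2 statements merged into one kernel-verified Lean document; each statement's English description precedes it below -/
import Mathlib

section
/- Sign preservation under distributed lumping: for every (i,j) ∈ S̃, the entry Ã_{ij} has the same sign as A_{ij}, i.e. A_{ij} > 0 implies Ã_{ij} > 0 and A_{ij} < 0 implies Ã_{ij} < 0. In particular every diagonal entry Ã_{ii} remains positive. -/
/-!
Write `e` for the excluded sum and `T` for the retained absolute sum of a row. Since the row sum is
`∑_{S̃} A + e ≥ 0` and a retained negative entry makes `∑_{S̃} A < T`, we get `T + e > 0`; `T > 0`
because the diagonal is retained. For `e < 0` the lumped entry is `a (T + e) / T` when `a > 0` and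
`a (T - e) / T` when `a < 0`, so its sign is that of `a`. For `e ≥ 0` only the positive diagonal
entry moves, and it moves up.
-/

open Finset

section Row

variable {ι : Type*} [Fintype ι] (a : ι → ℝ) (p : ι → Prop) [DecidablePred p]

theorem sum_eq_sum_ite_add_sum_ite_ne_zero_and_not :
    ∑ k, a k = (∑ k, if p k then a k else 0) + ∑ k, if a k ≠ 0 ∧ ¬ p k then a k else 0 := by
  rw [← sum_add_distrib]
  refine sum_congr rfl fun k _ => ?_
  by_cases hp : p k <;> by_cases ha : a k = 0 <;> simp [hp, ha]

theorem sum_ite_abs_pos {i : ι} (hi : p i) (ha : a i ≠ 0) :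
    0 < ∑ k, if p k then |a k| else 0 :=
  calc 0 < |a i| := abs_pos.mpr ha
    _ = if p i then |a i| else 0 := (if_pos hi).symm
    _ ≤ ∑ k, if p k then |a k| else 0 :=
      single_le_sum (f := fun k => if p k then |a k| else 0)
        (fun k _ => by split_ifs <;> positivity) (mem_univ i)

theorem sum_ite_lt_sum_ite_abs {k : ι} (hk : p k) (ha : a k < 0) :
    (∑ k, if p k then a k else 0) < ∑ k, if p k then |a k| else 0 := by
  refine sum_lt_sum (fun j _ => ?_) ⟨k, mem_univ k, ?_⟩
  · split_ifs
    exacts [le_abs_self _, le_rfl]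
  · simp only [if_pos hk, abs_of_neg ha]
    linarith

end Row

theorem add_mul_abs_div_pos {a e T : ℝ} (hT : 0 < T) (hTe : 0 < T + e) (ha : 0 < a) :
    0 < a + e * |a| / T := by
  have : a + e * |a| / T = a * (T + e) / T := by
    rw [abs_of_pos ha]
    field_simp
  rw [this]
  positivity

theorem add_mul_abs_div_neg {a e T : ℝ} (hT : 0 < T) (he : e ≤ 0) (ha : a < 0) :
    a + e * |a| / T < 0 := by
  have : a + e * |a| / T = a * (T - e) / T := by
    rw [abs_of_neg ha]
    field_simp
    ring
  rw [this]
  exact div_neg_of_neg_of_pos (mul_neg_of_neg_of_pos ha (by linarith)) hT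

theorem distributed_lumping_sign_preservation_general
    (n : ℕ)
    (A : Matrix (Fin n) (Fin n) ℝ)
    (Stil : Fin n → Fin n → Prop) [DecidableRel Stil]
    (hdiagmem : ∀ i, Stil i i)
    (e T : Fin n → ℝ)
    (he : ∀ i, e i = ∑ k, if A i k ≠ 0 ∧ ¬ Stil i k then A i k else 0)
    (hT : ∀ i, T i = ∑ k, if Stil i k then |A i k| else 0)
    (Atil : Matrix (Fin n) (Fin n) ℝ)
    (hAtil : ∀ i j, Atil i j =
      if Stil i j then
        (if e i < 0 then A i j + e i * |A i j| / T i
         else if i = j then A i i + e i else A i j)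
      else 0)
    (hApos : ∀ i, 0 < A i i)
    (hrowsum : ∀ i, 0 ≤ ∑ j, A i j)
    (hneg : ∀ i, ∃ k, k ≠ i ∧ Stil i k ∧ A i k < 0) :
    (∀ i j, Stil i j → (0 < A i j → 0 < Atil i j) ∧ (A i j < 0 → Atil i j < 0)) ∧
    (∀ i, 0 < Atil i i) := by
  have hT_pos (i) : 0 < T i :=
    hT i ▸ sum_ite_abs_pos (A i) (Stil i) (hdiagmem i) (hApos i).ne'
  have hTe_pos (i) : 0 < T i + e i := by
    obtain ⟨k, -, hk, hAk⟩ := hneg i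
    have hsplit := sum_eq_sum_ite_add_sum_ite_ne_zero_and_not (A i) (Stil i)
    have hlt := sum_ite_lt_sum_ite_abs (A i) (Stil i) hk hAk
    linarith [hrowsum i, he i, hT i]
  have hsign (i j) (hij : Stil i j) :
      (0 < A i j → 0 < Atil i j) ∧ (A i j < 0 → Atil i j < 0) := by
    rw [hAtil, if_pos hij]
    split_ifs with hei hdiag
    · exact ⟨add_mul_abs_div_pos (hT_pos i) (hTe_pos i), add_mul_abs_div_neg (hT_pos i) hei.le⟩
    · subst hdiag
      exact ⟨fun _ => by linarith, fun h => absurd h (hApos i).not_gt⟩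
    · exact ⟨id, id⟩
  exact ⟨hsign, fun i => (hsign i i (hdiagmem i)).1 (hApos i)⟩

/-- **Sign preservation under distributed lumping.**
Given an `n × n` real matrix `A` with sparsity pattern `S = {(i,j) : A i j ≠ 0}`,
a target pattern `S̃ ⊆ S` containing the diagonal, row excluded-sums `e`,
retained absolute-value sums `T`, and the distributed-lumping matrix `Ã`,
under the stated assumptions every retained entry of `Ã` has the same sign as the
corresponding entry of `A`; in particular every diagonal entry of `Ã` is positive. -/
theorem distributed_lumping_sign_preservation
    (n : ℕ) (hn : 1 ≤ n)
    (A : Matrix (Fin n) (Fin n) ℝ)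
    (Stil : Fin n → Fin n → Prop) [DecidableRel Stil]
    (hsub : ∀ i j, Stil i j → A i j ≠ 0)
    (hdiagmem : ∀ i, Stil i i)
    (e T : Fin n → ℝ)
    (he : ∀ i, e i = ∑ k, if A i k ≠ 0 ∧ ¬ Stil i k then A i k else 0)
    (hT : ∀ i, T i = ∑ k, if Stil i k then |A i k| else 0)
    (Atil : Matrix (Fin n) (Fin n) ℝ)
    (hAtil : ∀ i j, Atil i j =
      if Stil i j then
        (if e i < 0 then A i j + e i * |A i j| / T i
         else if i = j then A i i + e i else A i j)
      else 0)
    (hApos : ∀ i, 0 < A i i)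
    (hrowsum : ∀ i, 0 ≤ ∑ j, A i j)
    (hneg : ∀ i, ∃ k, k ≠ i ∧ Stil i k ∧ A i k < 0) :
    (∀ i j, Stil i j → (0 < A i j → 0 < Atil i j) ∧ (A i j < 0 → Atil i j < 0)) ∧
    (∀ i, 0 < Atil i i) :=
  distributed_lumping_sign_preservation_general n A Stil hdiagmem e T he hT Atil hAtil hApos hrowsum
    hneg
end

section
/- Negative entries are amplified after diagonal scaling: for every row i with e_i < 0 and every (i,j) ∈ S̃ with A_{ij} < 0, one has Ã_{ij}/Ã_{ii} = c_i · (A_{ij}/A_{ii}) with c_i = (1 − e_i/T_i)/(1 + e_i/T_i), and this factor satisfies c_i > 1. -/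
/-! Write `r = e_i / T_i`. On a row with `e_i < 0`, a retained negative entry becomes
`a + r|a| = (1 - r) a` while the diagonal becomes `d + r|d| = (1 + r) d`, so the scaled entry is
multiplied by `(1 - r) / (1 + r)`, which exceeds `1` as soon as `-1 < r < 0`. The bound `r > -1`,
i.e. `T_i + e_i > 0`, holds because the row sum `e_i + Σ_{S̃} A_{ik}` is non-negative and the
retained negative entry makes `Σ_{S̃} A_{ik}` strictly smaller than `T_i`. -/

open Finset

section Row

variable {ι : Type*} [Fintype ι] (a : ι → ℝ) (S : ι → Prop) [DecidablePred S]

theorem sum_eq_sum_excluded_add_sum_retained :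
    ∑ k, a k = (∑ k, if a k ≠ 0 ∧ ¬ S k then a k else 0) + ∑ k, if S k then a k else 0 := by
  rw [← sum_add_distrib]
  refine sum_congr rfl fun k _ => ?_
  by_cases hS : S k
  · simp [hS]
  · by_cases h0 : a k = 0 <;> simp [hS, h0]

variable {a S}

theorem sum_abs_retained_pos {i : ι} (hi : S i) (hai : a i ≠ 0) :
    0 < ∑ k, if S k then |a k| else 0 :=
  calc (0 : ℝ) < if S i then |a i| else 0 := by simpa [hi] using hai
    _ ≤ _ := single_le_sum (f := fun k => if S k then |a k| else 0)
        (fun k _ => by positivity) (mem_univ i)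

theorem sum_retained_lt_sum_abs_retained {k : ι} (hk : S k) (hak : a k < 0) :
    (∑ k, if S k then a k else 0) < ∑ k, if S k then |a k| else 0 := by
  refine sum_lt_sum (fun m _ => ?_) ⟨k, mem_univ k, ?_⟩
  · split_ifs
    exacts [le_abs_self _, le_rfl]
  · simp only [if_pos hk, abs_of_neg hak]
    linarith

theorem sum_abs_retained_add_sum_excluded_pos (hsum : 0 ≤ ∑ k, a k) {k : ι} (hk : S k)
    (hak : a k < 0) :
    0 < (∑ k, if S k then |a k| else 0) + ∑ k, if a k ≠ 0 ∧ ¬ S k then a k else 0 := by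
  have := sum_retained_lt_sum_abs_retained hk hak
  rw [sum_eq_sum_excluded_add_sum_retained a S] at hsum
  linarith

end Row

theorem div_add_mul_abs_eq_mul_div {a d r : ℝ} (ha : a < 0) (hd : 0 < d) (hr : 0 < 1 + r) :
    (a + r * |a|) / (d + r * |d|) = (1 - r) / (1 + r) * (a / d) := by
  rw [abs_of_neg ha, abs_of_pos hd]
  field_simp
  ring

theorem one_lt_one_sub_div_one_add {r : ℝ} (hr : r < 0) (hr' : 0 < 1 + r) :
    1 < (1 - r) / (1 + r) := by
  rw [lt_div_iff₀ hr']
  linarith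

theorem distributed_lumping_negative_entries_amplified_general
    (n : ℕ)
    (A : Matrix (Fin n) (Fin n) ℝ)
    (Stil : Fin n → Fin n → Prop) [DecidableRel Stil]
    (hdiagmem : ∀ i, Stil i i)
    (e T : Fin n → ℝ)
    (he : ∀ i, e i = ∑ k, if A i k ≠ 0 ∧ ¬ Stil i k then A i k else 0)
    (hT : ∀ i, T i = ∑ k, if Stil i k then |A i k| else 0)
    (Atil : Matrix (Fin n) (Fin n) ℝ)
    (hAtil : ∀ i j, Atil i j =
      if Stil i j then
        (if e i < 0 then A i j + e i * |A i j| / T i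
         else if i = j then A i i + e i else A i j)
      else 0)
    (hApos : ∀ i, 0 < A i i)
    (hrowsum : ∀ i, 0 ≤ ∑ j, A i j)
    (hneg : ∀ i, ∃ k, k ≠ i ∧ Stil i k ∧ A i k < 0) :
    ∀ i, e i < 0 →
      (∀ j, Stil i j → A i j < 0 →
        Atil i j / Atil i i =
          ((1 - e i / T i) / (1 + e i / T i)) * (A i j / A i i)) ∧
      1 < (1 - e i / T i) / (1 + e i / T i) := by
  intro i hei
  have hTpos : 0 < T i := hT i ▸ sum_abs_retained_pos (hdiagmem i) (hApos i).ne'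
  obtain ⟨k, -, hk, hAk⟩ := hneg i
  have hTe : 0 < T i + e i := by
    rw [hT i, he i]
    exact sum_abs_retained_add_sum_excluded_pos (hrowsum i) hk hAk
  have hr : 0 < 1 + e i / T i := by
    rw [one_add_div hTpos.ne']
    positivity
  refine ⟨fun j hj hAj => ?_, one_lt_one_sub_div_one_add (div_neg_of_neg_of_pos hei hTpos) hr⟩
  rw [hAtil i j, hAtil i i, if_pos hj, if_pos (hdiagmem i), if_pos hei, if_pos hei,
    mul_div_right_comm, mul_div_right_comm (e i)]
  exact div_add_mul_abs_eq_mul_div hAj (hApos i) hr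

/-- **Negative entries are amplified after diagonal scaling.**
On rows where `e i < 0`, every retained negative entry of the diagonally scaled
lumped matrix `D̃⁻¹ Ã` equals the corresponding entry of `D⁻¹ A` multiplied by
`c i = (1 - e i / T i) / (1 + e i / T i)`, and this factor satisfies `c i > 1`. -/
theorem distributed_lumping_negative_entries_amplified
    (n : ℕ) (hn : 1 ≤ n)
    (A : Matrix (Fin n) (Fin n) ℝ)
    (Stil : Fin n → Fin n → Prop) [DecidableRel Stil]
    (hsub : ∀ i j, Stil i j → A i j ≠ 0)
    (hdiagmem : ∀ i, Stil i i)
    (e T : Fin n → ℝ)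
    (he : ∀ i, e i = ∑ k, if A i k ≠ 0 ∧ ¬ Stil i k then A i k else 0)
    (hT : ∀ i, T i = ∑ k, if Stil i k then |A i k| else 0)
    (Atil : Matrix (Fin n) (Fin n) ℝ)
    (hAtil : ∀ i j, Atil i j =
      if Stil i j then
        (if e i < 0 then A i j + e i * |A i j| / T i
         else if i = j then A i i + e i else A i j)
      else 0)
    (hApos : ∀ i, 0 < A i i)
    (hrowsum : ∀ i, 0 ≤ ∑ j, A i j)
    (hneg : ∀ i, ∃ k, k ≠ i ∧ Stil i k ∧ A i k < 0) :
    ∀ i, e i < 0 →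
      (∀ j, Stil i j → A i j < 0 →
        Atil i j / Atil i i =
          ((1 - e i / T i) / (1 + e i / T i)) * (A i j / A i i)) ∧
      1 < (1 - e i / T i) / (1 + e i / T i) :=
  distributed_lumping_negative_entries_amplified_general n A Stil hdiagmem e T he hT Atil hAtil
    hApos hrowsum hneg
end
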